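/- For an integer r ≥ 1 and real λ > 0, set C(2r,λ) = ∫_{−∞}^{∞} t^{2r} e^{−t²} K_0(t² + λ²) dt and D(r,λ) = ∫_{−∞}^{∞} t^{2r} e^{−t²} K_1(t² + λ²) dt. Then: (1) C(2r,λ) + D(r,λ) = (r − 1/2) · C(2r−2,λ); and (2) the function λ ↦ C(2r,λ) is differentiable on (0,∞) with derivative d/dλ C(2r,λ) = −2λ D(r,λ). -/

import Mathlib

open scoped BigOperators

open MeasureTheory Set Filter Real Metric

/-- The `K`-Bessel function `K_v(y) = (1/2)∫_0^∞ e^{−y(t+t⁻¹)/2} t^v dt/t`. -/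
noncomputable def besselK (v : ℤ) (y : ℝ) : ℝ :=
  (1 / 2) * ∫ t in Set.Ioi (0 : ℝ), Real.exp (-y * (t + t⁻¹) / 2) * t ^ v / t

/-- `C(2r,λ) = ∫_ℝ t^{2r} e^{−t²} K_0(t²+λ²) dt`. -/
noncomputable def Cint (r : ℕ) (lam : ℝ) : ℝ :=
  ∫ t : ℝ, t ^ (2 * r) * Real.exp (-t ^ 2) * besselK 0 (t ^ 2 + lam ^ 2)

/-- `D(r,λ) = ∫_ℝ t^{2r} e^{−t²} K_1(t²+λ²) dt`. -/
noncomputable def Dint (r : ℕ) (lam : ℝ) : ℝ :=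
  ∫ t : ℝ, t ^ (2 * r) * Real.exp (-t ^ 2) * besselK 1 (t ^ 2 + lam ^ 2)

/-! ### Elementary inequalities -/

lemma pow_div_fact_le_exp (x : ℝ) (hx : 0 ≤ x) (k : ℕ) :
    x ^ k / (k.factorial : ℝ) ≤ Real.exp x := by
  refine le_trans ?_ (Real.sum_le_exp_of_nonneg hx (k+1))
  refine Finset.single_le_sum (f := fun i => x ^ i / (i.factorial : ℝ)) (fun i _ => by positivity) ?_
  simp

lemma exp_neg_le (x : ℝ) (hx : 0 < x) (k : ℕ) :
    Real.exp (-x) ≤ (k.factorial : ℝ) * (x⁻¹) ^ k := by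
  have h := pow_div_fact_le_exp x hx.le k
  have hk : (0:ℝ) < k.factorial := by positivity
  rw [div_le_iff₀ hk] at h
  rw [Real.exp_neg, inv_pow]
  rw [inv_le_iff_one_le_mul₀ (Real.exp_pos x), mul_comm ((k.factorial:ℝ)) _, mul_assoc]
  calc (1:ℝ) = (x^k)⁻¹ * x^k := (inv_mul_cancel₀ (pow_pos hx k).ne').symm
  _ ≤ (x ^ k)⁻¹ * ((k.factorial:ℝ) * Real.exp x) := by
      apply mul_le_mul_of_nonneg_left (by linarith) (by positivity)

lemma two_le_add_inv {t : ℝ} (ht : 0 < t) : 2 ≤ t + t⁻¹ := by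
  rw [← sub_nonneg]
  have h : t + t⁻¹ - 2 = (t - 1)^2 / t := by field_simp; ring
  rw [h]; positivity

/-! ### Integrability of the Bessel kernel -/

lemma contOn_kernel (c : ℝ) (m : ℤ) :
    ContinuousOn (fun t : ℝ => Real.exp (-(c * (t + t⁻¹))) * t ^ m) (Ioi 0) := by
  apply ContinuousOn.mul
  · exact (((continuousOn_id.add (continuousOn_inv₀.mono
      (by intro x hx; exact ne_of_gt hx))).const_smul c).neg).rexp
  · exact (continuousOn_id (s := Ioi (0:ℝ))).zpow₀ m (fun x hx => Or.inl (ne_of_gt hx))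

lemma integrableOn_kernel (c : ℝ) (hc : 0 < c) (m : ℤ) :
    IntegrableOn (fun t : ℝ => Real.exp (-(c * (t + t⁻¹))) * t ^ m) (Ioi 0) := by
  set k : ℕ := m.natAbs with hk
  have hfact : (0:ℝ) < k.factorial := by positivity
  rw [← Ioc_union_Ioi_eq_Ioi (zero_le_one (α := ℝ))]
  apply IntegrableOn.union
  · -- bounded on Ioc 0 1
    refine ⟨((contOn_kernel c m).mono Ioc_subset_Ioi_self).aestronglyMeasurable measurableSet_Ioc,
      HasFiniteIntegral.restrict_of_bounded (C := (k.factorial : ℝ) * (c⁻¹)^k)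
        measure_Ioc_lt_top ?_⟩
    rw [ae_restrict_iff' measurableSet_Ioc]
    filter_upwards with t ht
    obtain ⟨ht0, ht1⟩ := ht
    have h1 : Real.exp (-(c * (t + t⁻¹))) ≤ (k.factorial : ℝ) * (c⁻¹)^k * t ^ k := by
      calc Real.exp (-(c * (t + t⁻¹))) ≤ Real.exp (-(c * t⁻¹)) := by
            apply Real.exp_le_exp.2
            have : c * t⁻¹ ≤ c * (t + t⁻¹) := by nlinarith [inv_pos.2 ht0]
            linarith
      _ ≤ (k.factorial : ℝ) * ((c * t⁻¹)⁻¹)^k := exp_neg_le _ (by positivity) k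
      _ = (k.factorial : ℝ) * (c⁻¹)^k * t ^ k := by rw [mul_inv, inv_inv, mul_pow, mul_assoc]
    have h2 : (t:ℝ) ^ (k:ℤ) * t ^ m ≤ 1 := by
      have hnn : (0:ℤ) ≤ (k:ℤ) + m := by omega
      obtain ⟨n, hn⟩ := Int.eq_ofNat_of_zero_le hnn
      rw [← zpow_add₀ (ne_of_gt ht0), hn, zpow_natCast]
      exact pow_le_one₀ ht0.le ht1
    have hzm : (0:ℝ) < t ^ m := zpow_pos ht0 m
    rw [Real.norm_eq_abs, abs_of_nonneg (by positivity)]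
    calc Real.exp (-(c * (t + t⁻¹))) * t ^ m ≤ ((k.factorial : ℝ) * (c⁻¹)^k * t ^ k) * t ^ m :=
          mul_le_mul_of_nonneg_right h1 hzm.le
    _ = (k.factorial : ℝ) * (c⁻¹)^k * (t ^ (k:ℤ) * t ^ m) := by rw [zpow_natCast]; ring
    _ ≤ (k.factorial : ℝ) * (c⁻¹)^k * 1 := by
          apply mul_le_mul_of_nonneg_left h2 (by positivity)
    _ = (k.factorial : ℝ) * (c⁻¹)^k := mul_one _
  · -- exponential decay on Ioi 1
    have hint : IntegrableOn
        (fun t : ℝ => ((k.factorial : ℝ) * (2/c)^k) * Real.exp (-(c/2) * t)) (Ioi 1) :=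
      (exp_neg_integrableOn_Ioi 1 (by positivity)).const_mul _
    apply hint.mono' (((contOn_kernel c m).mono
      (Ioi_subset_Ioi zero_le_one)).aestronglyMeasurable measurableSet_Ioi)
    rw [ae_restrict_iff' measurableSet_Ioi]
    filter_upwards with t ht
    rw [mem_Ioi] at ht
    have ht0 : (0:ℝ) < t := lt_trans zero_lt_one ht
    have h1 : (t:ℝ) ^ m ≤ t ^ (k:ℤ) := zpow_le_zpow_right₀ ht.le (by omega)
    have h2 : (t:ℝ) ^ k ≤ (k.factorial : ℝ) * (2/c)^k * Real.exp ((c/2) * t) := by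
      have hp := pow_div_fact_le_exp ((c/2)*t) (by positivity) k
      rw [div_le_iff₀ hfact] at hp
      calc (t:ℝ)^k = ((c/2)*t)^k * (2/c)^k := by
            rw [← mul_pow]; congr 1; field_simp
      _ ≤ ((k.factorial : ℝ) * Real.exp ((c/2)*t)) * (2/c)^k := by
            apply mul_le_mul_of_nonneg_right ?_ (by positivity)
            rw [mul_comm ((k.factorial:ℝ))]
            exact hp
      _ = (k.factorial : ℝ) * (2/c)^k * Real.exp ((c/2) * t) := by ring
    have h3 : Real.exp (-(c * (t + t⁻¹))) ≤ Real.exp (-(c*t)) := by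
      apply Real.exp_le_exp.2
      have : c * t ≤ c * (t + t⁻¹) := by nlinarith [inv_pos.2 ht0]
      linarith
    rw [Real.norm_eq_abs, abs_of_nonneg (by positivity)]
    calc Real.exp (-(c * (t + t⁻¹))) * t ^ m ≤ Real.exp (-(c*t)) * t ^ (k:ℤ) := by
          apply mul_le_mul h3 h1 (le_of_lt (zpow_pos ht0 m)) (Real.exp_pos _).le
    _ = Real.exp (-(c*t)) * t ^ k := by rw [zpow_natCast]
    _ ≤ Real.exp (-(c*t)) * ((k.factorial : ℝ) * (2/c)^k * Real.exp ((c/2) * t)) :=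
          mul_le_mul_of_nonneg_left h2 (Real.exp_pos _).le
    _ = ((k.factorial : ℝ) * (2/c)^k) * Real.exp (-(c/2) * t) := by
          rw [mul_comm (Real.exp _), mul_assoc, ← Real.exp_add]
          congr 2
          ring

/-! ### Basic properties of `besselK` -/

lemma kernel_eq (y : ℝ) (v : ℤ) {t : ℝ} (ht : t ∈ Ioi (0:ℝ)) :
    Real.exp (-y * (t + t⁻¹) / 2) * t ^ v / t
      = Real.exp (-((y/2) * (t + t⁻¹))) * t ^ (v - 1) := by
  rw [mem_Ioi] at ht
  rw [zpow_sub_one₀ (ne_of_gt ht)]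
  rw [div_eq_mul_inv, mul_assoc]
  congr 2
  ring

lemma besselK_eq (v : ℤ) (y : ℝ) :
    besselK v y = (1/2) * ∫ t in Ioi (0:ℝ), Real.exp (-((y/2) * (t + t⁻¹))) * t ^ (v - 1) := by
  unfold besselK
  congr 1
  exact setIntegral_congr_fun measurableSet_Ioi (fun t ht => kernel_eq y v ht)

lemma integrableOn_besselK_integrand (v : ℤ) {y : ℝ} (hy : 0 < y) :
    IntegrableOn (fun t : ℝ => Real.exp (-y * (t + t⁻¹) / 2) * t ^ v / t) (Ioi 0) := by
  apply (integrableOn_kernel (y/2) (by positivity) (v-1)).congr_fun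
    (fun t ht => (kernel_eq y v ht).symm) measurableSet_Ioi

lemma besselK_nonneg (v : ℤ) (y : ℝ) : 0 ≤ besselK v y := by
  unfold besselK
  apply mul_nonneg (by norm_num)
  apply setIntegral_nonneg measurableSet_Ioi
  intro t ht
  rw [mem_Ioi] at ht
  positivity

lemma besselK_le {v : ℤ} {c y : ℝ} (hc : 0 < c) (hcy : c ≤ y) :
    besselK v y ≤ Real.exp (c - y) * besselK v c := by
  rw [besselK_eq, besselK_eq, mul_comm (Real.exp (c-y)), mul_assoc, ← integral_mul_const]
  apply mul_le_mul_of_nonneg_left ?_ (by norm_num)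
  apply setIntegral_mono_on
  · exact integrableOn_kernel (y/2) (by linarith) (v-1)
  · exact (integrableOn_kernel (c/2) (by linarith) (v-1)).mul_const _
  · exact measurableSet_Ioi
  · intro t ht
    rw [mem_Ioi] at ht
    have h2 : 2 ≤ t + t⁻¹ := two_le_add_inv ht
    rw [mul_right_comm]
    apply mul_le_mul_of_nonneg_right ?_ (le_of_lt (zpow_pos ht _))
    rw [← Real.exp_add]
    apply Real.exp_le_exp.2
    nlinarith

lemma contOn_integrand (v : ℤ) (y : ℝ) :
    ContinuousOn (fun t : ℝ => Real.exp (-y * (t + t⁻¹) / 2) * t ^ v / t) (Ioi 0) := by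
  have hinv : ContinuousOn (fun t : ℝ => t⁻¹) (Ioi (0:ℝ)) :=
    continuousOn_inv₀.mono (by intro x hx; exact ne_of_gt hx)
  apply ContinuousOn.div
  · apply ContinuousOn.mul
    · apply ContinuousOn.rexp
      apply ContinuousOn.div_const
      exact (continuousOn_id.add hinv).const_smul (-y)
    · exact (continuousOn_id (s := Ioi (0:ℝ))).zpow₀ v (fun x hx => Or.inl (ne_of_gt hx))
  · exact continuousOn_id
  · intro x hx; exact ne_of_gt hx

/-! ### Differentiability of `besselK` -/

lemma hasDerivAt_besselK (v : ℤ) {y : ℝ} (hy : 0 < y) :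
    HasDerivAt (besselK v) (-(1/2) * (besselK (v-1) y + besselK (v+1) y)) y := by
  have hmain := hasDerivAt_integral_of_dominated_loc_of_deriv_le
    (μ := volume.restrict (Ioi (0:ℝ))) (x₀ := y)
    (F := fun x t => Real.exp (-x * (t + t⁻¹) / 2) * t ^ v / t)
    (F' := fun x t => (-(t + t⁻¹)/2) * (Real.exp (-x * (t + t⁻¹) / 2) * t ^ v / t))
    (bound := fun t => (1/2) * (Real.exp (-((y/4) * (t + t⁻¹))) * t ^ v
        + Real.exp (-((y/4) * (t + t⁻¹))) * t ^ (v-2)))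
    (Metric.ball_mem_nhds y (half_pos hy))
    (Eventually.of_forall fun x =>
      ((contOn_integrand v x).aestronglyMeasurable measurableSet_Ioi))
    (integrableOn_besselK_integrand v hy)
    ?meas' ?bound ?bint ?diff
  · -- conclude
    obtain ⟨-, hD⟩ := hmain
    have h2 : HasDerivAt
        (fun x => (1/2 : ℝ) * ∫ t in Ioi (0:ℝ), Real.exp (-x * (t + t⁻¹) / 2) * t ^ v / t)
        ((1/2) * ∫ t in Ioi (0:ℝ),
          (-(t + t⁻¹)/2) * (Real.exp (-y * (t + t⁻¹) / 2) * t ^ v / t)) y :=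
      hD.const_mul (1/2)
    have heq : (1/2 : ℝ) * ∫ t in Ioi (0:ℝ),
          (-(t + t⁻¹)/2) * (Real.exp (-y * (t + t⁻¹) / 2) * t ^ v / t)
        = -(1/2) * (besselK (v-1) y + besselK (v+1) y) := by
      have h3 : ∀ t ∈ Ioi (0:ℝ), (-(t + t⁻¹)/2) * (Real.exp (-y * (t + t⁻¹) / 2) * t ^ v / t)
          = (-(1/2)) * (Real.exp (-y * (t + t⁻¹) / 2) * t ^ (v-1) / t
              + Real.exp (-y * (t + t⁻¹) / 2) * t ^ (v+1) / t) := by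
        intro t ht
        rw [mem_Ioi] at ht
        have ht' : t ≠ 0 := ne_of_gt ht
        have e1 : (t:ℝ) ^ (v-1) = t ^ v * t⁻¹ := by rw [zpow_sub_one₀ ht']
        have e2 : (t:ℝ) ^ (v+1) = t ^ v * t := by rw [zpow_add_one₀ ht']
        rw [e1, e2]
        field_simp
        ring
      rw [setIntegral_congr_fun measurableSet_Ioi h3, integral_const_mul]
      rw [integral_add ((integrableOn_besselK_integrand (v-1) hy))
        ((integrableOn_besselK_integrand (v+1) hy))]
      unfold besselK
      ring
    rw [heq] at h2
    exact h2
  case meas' =>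
    apply ContinuousOn.aestronglyMeasurable ?_ measurableSet_Ioi
    apply ContinuousOn.mul ?_ (contOn_integrand v y)
    apply ContinuousOn.div_const
    apply ContinuousOn.neg
    exact continuousOn_id.add (continuousOn_inv₀.mono (by intro x hx; exact ne_of_gt hx))
  case bound =>
    rw [ae_restrict_iff' measurableSet_Ioi]
    filter_upwards with t ht
    intro x hx
    rw [mem_Ioi] at ht
    rw [Real.ball_eq_Ioo] at hx
    have hx2 : y/2 < x := by have := hx.1; linarith
    have htinv : 0 < t⁻¹ := inv_pos.2 ht
    have h2 : (2:ℝ) ≤ t + t⁻¹ := two_le_add_inv ht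
    rw [kernel_eq x v (mem_Ioi.2 ht)]
    rw [norm_mul, Real.norm_eq_abs, Real.norm_eq_abs,
      abs_of_nonpos (by nlinarith : -(t + t⁻¹)/2 ≤ 0),
      abs_of_nonneg (by positivity : (0:ℝ) ≤ Real.exp (-((x/2) * (t + t⁻¹))) * t ^ (v-1))]
    have hexp : Real.exp (-((x/2) * (t + t⁻¹))) ≤ Real.exp (-((y/4) * (t + t⁻¹))) := by
      apply Real.exp_le_exp.2
      rw [neg_le_neg_iff]
      apply mul_le_mul_of_nonneg_right (by linarith) (by linarith)
    calc -(-(t + t⁻¹)/2) * (Real.exp (-((x/2) * (t + t⁻¹))) * t ^ (v-1))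
        ≤ ((t + t⁻¹)/2) * (Real.exp (-((y/4) * (t + t⁻¹))) * t ^ (v-1)) := by
          rw [neg_div, neg_neg]
          apply mul_le_mul_of_nonneg_left ?_ (by linarith)
          exact mul_le_mul_of_nonneg_right hexp (le_of_lt (zpow_pos ht _))
      _ = (1/2) * (Real.exp (-((y/4) * (t + t⁻¹))) * t ^ v
            + Real.exp (-((y/4) * (t + t⁻¹))) * t ^ (v-2)) := by
          have e1 : t * t ^ (v-1) = (t:ℝ) ^ v := by
            rw [mul_comm, ← zpow_add_one₀ (ne_of_gt ht)]; congr 1; ring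
          have e2 : t⁻¹ * t ^ (v-1) = (t:ℝ) ^ (v-2) := by
            rw [mul_comm, ← zpow_sub_one₀ (ne_of_gt ht)]; congr 1; ring
          rw [← e1, ← e2]; ring
  case bint =>
    exact ((integrableOn_kernel (y/4) (by linarith) v).add
      (integrableOn_kernel (y/4) (by linarith) (v-2))).const_mul _
  case diff =>
    rw [ae_restrict_iff' measurableSet_Ioi]
    filter_upwards with t ht
    intro x hx
    rw [mem_Ioi] at ht
    have hd : HasDerivAt (fun x : ℝ => Real.exp (-x * (t + t⁻¹) / 2))
        ((-(t + t⁻¹)/2) * Real.exp (-x * (t + t⁻¹) / 2)) x := by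
      have h1 : HasDerivAt (fun x : ℝ => -x * (t + t⁻¹) / 2) (-(t + t⁻¹)/2) x := by
        simpa using ((hasDerivAt_id x).neg.mul_const ((t + t⁻¹))).div_const 2
      simpa [mul_comm] using h1.exp
    have := (hd.mul_const ((t:ℝ) ^ v)).div_const t
    refine this.congr_deriv ?_
    ring

/-! ### `K₋₁ = K₁` -/

lemma image_inv_Ioi_zero : (fun t : ℝ => t⁻¹) '' Ioi 0 = Ioi 0 := by
  ext x
  simp only [mem_image, mem_Ioi]
  constructor
  · rintro ⟨t, ht, rfl⟩; positivity
  · intro hx; exact ⟨x⁻¹, by positivity, by simp⟩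

lemma besselK_neg_one (y : ℝ) : besselK (-1) y = besselK 1 y := by
  unfold besselK
  congr 1
  have h := integral_image_eq_integral_abs_deriv_smul (s := Ioi (0:ℝ))
    (f := fun t => t⁻¹) (f' := fun t => -(t^2)⁻¹) measurableSet_Ioi
    (fun x hx => (hasDerivAt_inv (ne_of_gt hx)).hasDerivWithinAt)
    (fun a ha b hb hab => by simpa using congrArg (·⁻¹) hab)
    (fun t => Real.exp (-y * (t + t⁻¹) / 2) * t ^ (-1 : ℤ) / t)
  rw [image_inv_Ioi_zero] at h
  rw [h]
  apply setIntegral_congr_fun measurableSet_Ioi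
  intro t ht
  rw [mem_Ioi] at ht
  have ht' : t ≠ 0 := ne_of_gt ht
  simp only [smul_eq_mul]
  rw [abs_of_nonpos (by simp; positivity : -((t:ℝ)^2)⁻¹ ≤ 0), neg_neg, inv_inv]
  rw [zpow_neg_one, inv_inv, zpow_one]
  rw [add_comm t⁻¹ t]
  field_simp

lemma hasDerivAt_besselK_zero {y : ℝ} (hy : 0 < y) :
    HasDerivAt (besselK 0) (-besselK 1 y) y := by
  have h := hasDerivAt_besselK 0 hy
  have he : -(1/2 : ℝ) * (besselK (0-1) y + besselK (0+1) y) = -besselK 1 y := by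
    rw [show ((0:ℤ)-1) = -1 by norm_num, show ((0:ℤ)+1) = 1 by norm_num, besselK_neg_one]
    ring
  rwa [he] at h

lemma continuousOn_besselK (v : ℤ) : ContinuousOn (besselK v) (Ioi 0) := by
  intro y hy
  exact ((hasDerivAt_besselK v (mem_Ioi.1 hy)).continuousAt).continuousWithinAt

/-! ### Integrability of the `Cint`/`Dint` integrands -/

lemma continuous_CD_integrand (v : ℤ) (n : ℕ) {lam : ℝ} (hlam : 0 < lam) :
    Continuous (fun t : ℝ => t ^ n * Real.exp (-t^2) * besselK v (t^2 + lam^2)) := by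
  have h1 : Continuous fun t : ℝ => t ^ 2 + lam ^ 2 := by continuity
  have h2 : ContinuousOn (fun t : ℝ => besselK v (t^2 + lam^2)) univ := by
    apply (continuousOn_besselK v).comp (h1.continuousOn)
    intro t _
    rw [mem_Ioi]
    positivity
  rw [← continuousOn_univ]
  apply ContinuousOn.mul ?_ h2
  exact (Continuous.mul (continuous_pow n) (((continuous_pow 2).neg).rexp)).continuousOn

lemma besselK_sq_bound (v : ℤ) (n : ℕ) {c : ℝ} (hc : 0 < c) {l t : ℝ} (hl : c ≤ l^2) :
    |t ^ n * Real.exp (-t^2) * besselK v (t^2 + l^2)|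
      ≤ (Real.exp c * besselK v c) * (|t| ^ n * Real.exp (-(2*t^2))) := by
  have hb : besselK v (t^2 + l^2) ≤ Real.exp (c - (t^2 + l^2)) * besselK v c :=
    besselK_le hc (by nlinarith)
  have hnn := besselK_nonneg v (t^2 + l^2)
  rw [abs_mul, abs_mul, abs_of_nonneg (Real.exp_pos _).le, abs_of_nonneg hnn, abs_pow]
  calc |t| ^ n * Real.exp (-t^2) * besselK v (t^2 + l^2)
      ≤ |t| ^ n * Real.exp (-t^2) * (Real.exp (c - (t^2 + l^2)) * besselK v c) := by
        apply mul_le_mul_of_nonneg_left hb (by positivity)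
    _ = (Real.exp (-t^2) * Real.exp (c - (t^2 + l^2))) * (|t| ^ n * besselK v c) := by ring
    _ ≤ (Real.exp c * Real.exp (-(2*t^2))) * (|t| ^ n * besselK v c) := by
        apply mul_le_mul_of_nonneg_right ?_
          (mul_nonneg (pow_nonneg (abs_nonneg t) n) (besselK_nonneg v c))
        rw [← Real.exp_add, ← Real.exp_add]
        apply Real.exp_le_exp.2
        nlinarith
    _ = (Real.exp c * besselK v c) * (|t| ^ n * Real.exp (-(2*t^2))) := by ring

lemma integrable_absPow_exp (n : ℕ) :
    Integrable (fun t : ℝ => |t| ^ n * Real.exp (-(2*t^2))) := by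
  have h1 : Integrable (fun t : ℝ => ((n.factorial : ℝ) * Real.exp 1) * Real.exp (-(1:ℝ)*t^2)) :=
    (integrable_exp_neg_mul_sq one_pos).const_mul _
  apply h1.mono' (Continuous.aestronglyMeasurable (by continuity))
  filter_upwards with t
  rw [Real.norm_eq_abs, abs_of_nonneg (by positivity)]
  have hp := pow_div_fact_le_exp (|t|) (abs_nonneg t) n
  rw [div_le_iff₀ (by positivity)] at hp
  have he : Real.exp (|t|) * Real.exp (-(2*t^2)) ≤ Real.exp 1 * Real.exp (-(1:ℝ)*t^2) := by
    rw [← Real.exp_add, ← Real.exp_add]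
    apply Real.exp_le_exp.2
    nlinarith [sq_abs t, sq_nonneg (|t| - 1)]
  calc |t|^n * Real.exp (-(2*t^2)) ≤ (Real.exp (|t|) * (n.factorial:ℝ)) * Real.exp (-(2*t^2)) :=
        mul_le_mul_of_nonneg_right hp (Real.exp_pos _).le
  _ = (n.factorial:ℝ) * (Real.exp (|t|) * Real.exp (-(2*t^2))) := by ring
  _ ≤ (n.factorial:ℝ) * (Real.exp 1 * Real.exp (-(1:ℝ)*t^2)) :=
        mul_le_mul_of_nonneg_left he (by positivity)
  _ = ((n.factorial : ℝ) * Real.exp 1) * Real.exp (-(1:ℝ)*t^2) := by ring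

lemma integrable_CD (v : ℤ) (n : ℕ) {lam : ℝ} (hlam : 0 < lam) :
    Integrable (fun t : ℝ => t ^ n * Real.exp (-t^2) * besselK v (t^2 + lam^2)) := by
  have hc : (0:ℝ) < lam^2 := by positivity
  apply (((integrable_absPow_exp n).const_mul (Real.exp (lam^2) * besselK v (lam^2))).mono'
    (continuous_CD_integrand v n hlam).aestronglyMeasurable)
  filter_upwards with t
  rw [Real.norm_eq_abs]
  exact besselK_sq_bound v n hc (le_refl _)

lemma continuous_besselK_sq (v : ℤ) {lam : ℝ} (hlam : 0 < lam) :
    Continuous (fun t : ℝ => besselK v (t^2 + lam^2)) := by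
  have h1 : Continuous fun t : ℝ => t ^ 2 + lam ^ 2 := by continuity
  have h2 : ContinuousOn (fun t : ℝ => besselK v (t^2 + lam^2)) univ := by
    apply (continuousOn_besselK v).comp (h1.continuousOn)
    intro t _
    rw [mem_Ioi]
    positivity
  rw [← continuousOn_univ]
  exact h2

theorem Cint_recurrence_and_deriv (r : ℕ) (hr : 1 ≤ r) (lam : ℝ) (hlam : 0 < lam) :
    Cint r lam + Dint r lam = ((r : ℝ) - 1 / 2) * Cint (r - 1) lam ∧
    HasDerivAt (fun l : ℝ => Cint r l) (-2 * lam * Dint r lam) lam := by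
  constructor
  · -- recurrence via integration by parts
    set m : ℕ := 2*r - 1 with hm
    have hm1 : m + 1 = 2*r := by omega
    have hm2 : m - 1 = 2*(r-1) := by omega
    have hderiv : ∀ t : ℝ, HasDerivAt
        (fun t : ℝ => t ^ m * Real.exp (-t^2) * besselK 0 (t^2 + lam^2))
        ((m:ℝ) * (t^(2*(r-1)) * Real.exp (-t^2) * besselK 0 (t^2+lam^2))
          - 2*(t^(2*r) * Real.exp (-t^2) * besselK 0 (t^2+lam^2))
          - 2*(t^(2*r) * Real.exp (-t^2) * besselK 1 (t^2+lam^2))) t := by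
      intro t
      have hpos : 0 < t^2 + lam^2 := by positivity
      have h1 : HasDerivAt (fun t : ℝ => t ^ m * Real.exp (-t^2))
          ((m:ℝ)*t^(m-1) * Real.exp (-t^2) + t^m * (Real.exp (-t^2) * (-(2*t)))) t := by
        have hp : HasDerivAt (fun t : ℝ => t ^ m) ((m:ℝ)*t^(m-1)) t := by
          simpa using hasDerivAt_pow m t
        have hexp : HasDerivAt (fun t : ℝ => Real.exp (-t^2)) (Real.exp (-t^2) * (-(2*t))) t := by
          have hsq : HasDerivAt (fun t : ℝ => -t^2) (-(2*t)) t := by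
            simpa [Pi.neg_def] using (hasDerivAt_pow 2 t).neg
          simpa using hsq.exp
        exact hp.mul hexp
      have hin : HasDerivAt (fun t : ℝ => t^2 + lam^2) (2*t) t := by
        simpa using (hasDerivAt_pow 2 t).add_const (lam^2)
      have h2 : HasDerivAt (fun t : ℝ => besselK 0 (t^2 + lam^2))
          (-besselK 1 (t^2+lam^2) * (2*t)) t := by
        have := (hasDerivAt_besselK_zero hpos).comp t hin; exact this
      have hmul := h1.mul h2
      refine hmul.congr_deriv ?_
      have hpow : t^(2*r) = t^m * t := by rw [← pow_succ, hm1]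
      rw [hpow, ← hm2]
      ring
    have hint1 := integrable_CD 0 (2*(r-1)) hlam
    have hint2 := integrable_CD 0 (2*r) hlam
    have hint3 := integrable_CD 1 (2*r) hlam
    have hphi := integrable_CD 0 m hlam
    have hpsi : Integrable (fun t : ℝ =>
        (m:ℝ) * (t^(2*(r-1)) * Real.exp (-t^2) * besselK 0 (t^2+lam^2))
          - 2*(t^(2*r) * Real.exp (-t^2) * besselK 0 (t^2+lam^2))
          - 2*(t^(2*r) * Real.exp (-t^2) * besselK 1 (t^2+lam^2))) :=
      ((hint1.const_mul _).sub (hint2.const_mul 2)).sub (hint3.const_mul 2)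
    have hi12 : Integrable (fun t : ℝ =>
        (m:ℝ) * (t^(2*(r-1)) * Real.exp (-t^2) * besselK 0 (t^2+lam^2))
          - 2*(t^(2*r) * Real.exp (-t^2) * besselK 0 (t^2+lam^2))) := by
      exact (hint1.const_mul _).sub (hint2.const_mul 2)
    have hzero := integral_eq_zero_of_hasDerivAt_of_integrable hderiv hpsi hphi
    rw [integral_sub hi12 (hint3.const_mul 2),
      integral_sub (hint1.const_mul _) (hint2.const_mul 2),
      integral_const_mul, integral_const_mul, integral_const_mul] at hzero
    have hmr : (m:ℝ) = 2*(r:ℝ) - 1 := by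
      have h := hm1
      have : ((m:ℝ) + 1) = 2*(r:ℝ) := by exact_mod_cast congrArg (Nat.cast : ℕ → ℝ) h
      linarith
    rw [hmr] at hzero
    unfold Cint Dint
    linarith [hzero]
  · -- derivative via differentiation under the integral sign
    set c : ℝ := lam^2/4 with hcdef
    have hc : (0:ℝ) < c := by positivity
    have hmain := hasDerivAt_integral_of_dominated_loc_of_deriv_le
      (μ := volume) (x₀ := lam)
      (F := fun l t => t ^ (2*r) * Real.exp (-t^2) * besselK 0 (t^2 + l^2))
      (F' := fun l t => t ^ (2*r) * Real.exp (-t^2) * (-besselK 1 (t^2 + l^2) * (2*l)))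
      (bound := fun t => (Real.exp c * besselK 1 c) * (|t|^(2*r) * Real.exp (-(2*t^2))) * (3*lam))
      (Metric.ball_mem_nhds lam (half_pos hlam))
      ((eventually_gt_nhds hlam).mono fun x hx => by
        have hx0 : 0 < x := hx
        exact (Continuous.aestronglyMeasurable (by
          have := continuous_besselK_sq 0 hx0
          exact (((continuous_pow (2*r)).mul (((continuous_pow 2).neg).rexp)).mul this))))
      (integrable_CD 0 (2*r) hlam)
      ?meas' ?bound ?bint ?diff
    · obtain ⟨-, hD⟩ := hmain
      have heq : (∫ t : ℝ, t ^ (2*r) * Real.exp (-t^2) * (-besselK 1 (t^2 + lam^2) * (2*lam)))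
          = -2 * lam * Dint r lam := by
        have hfe : (fun t : ℝ => t ^ (2*r) * Real.exp (-t^2) * (-besselK 1 (t^2 + lam^2) * (2*lam)))
            = (fun t : ℝ => (-2*lam) * (t ^ (2*r) * Real.exp (-t^2) * besselK 1 (t^2 + lam^2))) := by
          funext t; ring
        rw [hfe, integral_const_mul]
        rfl
      rw [heq] at hD
      exact hD
    case meas' =>
      apply Continuous.aestronglyMeasurable
      have hK := continuous_besselK_sq 1 hlam
      exact ((continuous_pow (2*r)).mul (((continuous_pow 2).neg).rexp)).mul
        ((hK.neg).mul continuous_const)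
    case bound =>
      filter_upwards with t
      intro l hl
      rw [Real.ball_eq_Ioo] at hl
      have hl1 : lam/2 < l := by have := hl.1; linarith
      have hl2 : l < 3*lam/2 := by have := hl.2; linarith
      have hl0 : 0 < l := by linarith
      have hcl : c ≤ l^2 := by rw [hcdef]; nlinarith
      have hb := besselK_sq_bound 1 (2*r) hc hcl (t := t)
      have he : t ^ (2*r) * Real.exp (-t^2) * (-besselK 1 (t^2 + l^2) * (2*l))
          = -((t ^ (2*r) * Real.exp (-t^2) * besselK 1 (t^2 + l^2)) * (2*l)) := by ring
      rw [Real.norm_eq_abs, he, abs_neg, abs_mul, abs_of_nonneg (by linarith : (0:ℝ) ≤ 2*l)]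
      calc |t ^ (2*r) * Real.exp (-t^2) * besselK 1 (t^2 + l^2)| * (2*l)
          ≤ ((Real.exp c * besselK 1 c) * (|t|^(2*r) * Real.exp (-(2*t^2)))) * (2*l) := by
            apply mul_le_mul_of_nonneg_right hb (by linarith)
        _ ≤ ((Real.exp c * besselK 1 c) * (|t|^(2*r) * Real.exp (-(2*t^2)))) * (3*lam) := by
            apply mul_le_mul_of_nonneg_left (by linarith) ?_
            have := besselK_nonneg 1 c
            positivity
    case bint =>
      exact ((integrable_absPow_exp (2*r)).const_mul _).mul_const _
    case diff =>
      filter_upwards with t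
      intro l hl
      rw [Real.ball_eq_Ioo] at hl
      have hl0 : 0 < l := by have := hl.1; linarith
      have hpos : 0 < t^2 + l^2 := by positivity
      have hin : HasDerivAt (fun l : ℝ => t^2 + l^2) (2*l) l := by
        simpa using (hasDerivAt_pow 2 l).const_add (t^2)
      have hK : HasDerivAt (fun l : ℝ => besselK 0 (t^2 + l^2))
          (-besselK 1 (t^2+l^2) * (2*l)) l := by
        have := (hasDerivAt_besselK_zero hpos).comp l hin; exact this
      exact hK.const_mul (t ^ (2*r) * Real.exp (-t^2))
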